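/- arXiv:math/0305164 — 2 statements merged into one kernel-verified Lean document; each statement's English description precedes it below -/
import Mathlib

section
/- For every subshift Σ one has 0 ≤ h*_𝒞(Σ) ≤ h_𝒞(Σ) ≤ h_top(Σ), and there exists a subshift for which all three of these inequalities are strict. In particular, there exist weak-QFT subshifts which are not subshifts of quasi-finite type. -/
/-!
Every extendable left constraint is a left constraint, and a left constraint has a nonempty
follower set, so it lies in the language; the three entropies are `limsup (log #Sₙ) / n` for these
nested families `Sₙ` of words of length `n`.

For the strict inequalities take the disjoint union of three subshifts on disjoint alphabets: a
word of length `≥ 2` is an (extendable) left constraint of the union exactly when it is one of a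
component. With the marker `none : Option α`, the components are
* the mirror shift over `Bool` (at most one marker, about which the sequence is symmetric): a
  marker just right of a marker-free word reflects its leftmost letter into the future, so all
  `2ⁿ` marker-free words are extendable left constraints;
* the marker shift over `Fin 4` (at most one marker): the `4ⁿ⁻¹` words `none :: u` are left
  constraints, but every left constraint of length `≥ 2` starts with the marker, so none of them
  extends to a past carrying infinitely many left constraints;
* the full shift on `8` letters, which has no left constraints of length `≥ 2`.
Counting words over the component alphabets (`3ⁿ`, `5ⁿ`) for the upper bounds gives
`log 2 ≤ h*_𝒞 ≤ log 3 < log 4 ≤ h_𝒞 ≤ log 5 < log 8 ≤ h_top`.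

The marker shift over `Fin 4` alone is its own reversal and has `h*_𝒞 = 0 < log 4 = h_𝒞 = h_top`,
so it is weak-QFT but not QFT.
-/

open Filter Set MeasureTheory

namespace QFTPaper

variable {A : Type*} {B : Type*}

/-- The left shift on bi-infinite sequences over the alphabet `A`. -/
def shift (x : ℤ → A) : ℤ → A := fun n => x (n + 1)

/-- A subshift: a closed, shift-invariant subset of `A^ℤ`. -/
def IsSubshift [TopologicalSpace A] (X : Set (ℤ → A)) : Prop :=
  IsClosed X ∧ shift '' X = X

/-- The finite word `w` occurs in `x` at position `k`. -/
def OccursAt (w : List A) (x : ℤ → A) (k : ℤ) : Prop :=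
  ∀ i : Fin w.length, x (k + (i : ℕ)) = w.get i

/-- The language of `X`: words of length `n` occurring in elements of `X`
(at position `0`, which is no restriction by shift-invariance). -/
def Lang (X : Set (ℤ → A)) (n : ℕ) : Set (List A) :=
  { w | w.length = n ∧ ∃ x ∈ X, OccursAt w x 0 }

/-- Topological entropy of a subshift. -/
noncomputable def hTop (X : Set (ℤ → A)) : ℝ :=
  limsup (fun n : ℕ => Real.log (Nat.card ↥(Lang X n)) / (n : ℝ)) atTop

/-- Follower set of the finite word `w = A₋ₙ…A₀` (listed from `A₋ₙ` to `A₀`):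
the set of one-sided sequences `B₀B₁B₂…` with `B ∈ X` and `B₋ₙ…B₀ = A₋ₙ…A₀`,
realized by requiring `w` to occur in `B` at positions `0,…,n` and reading off
the tail of `B` starting at the position of the last letter of `w`.
For the empty word this gives `X₊` (by shift-invariance). -/
def fol (X : Set (ℤ → A)) (w : List A) : Set (ℕ → A) :=
  { y | ∃ B ∈ X, (∀ i : Fin w.length, B ((i : ℕ) : ℤ) = w.get i) ∧
        ∀ k : ℕ, y k = B ((w.length : ℤ) - 1 + (k : ℤ)) }

/-- `w = A₋ₙ…A₀` is a left constraint:
`∅ ≠ fol(A₋ₙ…A₀) ⊊ fol(A₋ₙ₊₁…A₀)`. -/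
def IsLeftConstraint (X : Set (ℤ → A)) (w : List A) : Prop :=
  w ≠ [] ∧ fol X w ≠ ∅ ∧ fol X w ⊂ fol X w.tail

/-- `𝒞(X, n)`: the set of left constraints of length `n`. -/
def LC (X : Set (ℤ → A)) (n : ℕ) : Set (List A) :=
  { w | w.length = n ∧ IsLeftConstraint X w }

/-- The left constraint entropy `h_𝒞(X) = limsup (1/n) log⁺ #𝒞(X,n)`. -/
noncomputable def hC (X : Set (ℤ → A)) : ℝ :=
  limsup (fun n : ℕ => max 0 (Real.log (Nat.card ↥(LC X n))) / (n : ℝ)) atTop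

/-- The time-reversed subshift `X̄`. -/
def rev (X : Set (ℤ → A)) : Set (ℤ → A) :=
  (fun x : ℤ → A => fun n : ℤ => x (-n)) '' X

/-- The symmetric constraint entropy `h_𝒮𝒞(X) = min (h_𝒞(X), h_𝒞(X̄))`. -/
noncomputable def hSC (X : Set (ℤ → A)) : ℝ := min (hC X) (hC (rev X))

/-- Subshift of quasi-finite type: `h_𝒮𝒞(X) < h_top(X)`. -/
def IsQFT [TopologicalSpace A] (X : Set (ℤ → A)) : Prop :=
  IsSubshift X ∧ hSC X < hTop X

/-- The word `B₋ₘ…B₀` read off from a one-sided past `b` (where `b j = B₋ⱼ`). -/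
def wordOf (b : ℕ → A) (m : ℕ) : List A :=
  (List.range (m + 1)).map fun j => b (m - j)

/-- An extendable left constraint: a left constraint `A₋ₙ…A₀` which admits a
one-sided past `B` extending it such that `B₋ₘ…B₀` is again a left constraint
for infinitely many `m`. -/
def IsExtendable (X : Set (ℤ → A)) (w : List A) : Prop :=
  IsLeftConstraint X w ∧
  ∃ b : ℕ → A, wordOf b (w.length - 1) = w ∧
    ∀ N : ℕ, ∃ m, N ≤ m ∧ IsLeftConstraint X (wordOf b m)

/-- `𝒞*(X, n)`: the set of extendable left constraints of length `n`. -/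
def ELC (X : Set (ℤ → A)) (n : ℕ) : Set (List A) :=
  { w | w.length = n ∧ IsExtendable X w }

/-- The extendable left constraint entropy `h*_𝒞(X)`. -/
noncomputable def hCstar (X : Set (ℤ → A)) : ℝ :=
  limsup (fun n : ℕ => Real.log (Nat.card ↥(ELC X n)) / (n : ℝ)) atTop

/-- `h*_𝒮𝒞(X) = min (h*_𝒞(X), h*_𝒞(X̄))`. -/
noncomputable def hSCstar (X : Set (ℤ → A)) : ℝ := min (hCstar X) (hCstar (rev X))

/-- Subshift of weak quasi-finite type: `h*_𝒮𝒞(X) < h_top(X)`. -/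
def IsWeakQFT [TopologicalSpace A] (X : Set (ℤ → A)) : Prop :=
  IsSubshift X ∧ hSCstar X < hTop X

/-- Subshift of finite type: defined by excluding a finite set of finite words. -/
def IsSFT (X : Set (ℤ → A)) : Prop :=
  ∃ F : Finset (List A), X = { x | ∀ w ∈ F, ∀ k : ℤ, ¬ OccursAt w x k }

/-- Sofic subshift: the image of an SFT under a continuous shift-commuting map. -/
def IsSofic [TopologicalSpace A] (X : Set (ℤ → A)) : Prop :=
  ∃ (B : Type) (_ : Fintype B) (Y : Set (ℤ → B)) (π : (ℤ → B) → (ℤ → A)),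
    IsSFT Y ∧
    (letI : TopologicalSpace B := ⊥
     Continuous π) ∧
    (∀ x : ℤ → B, π (shift x) = shift (π x)) ∧ π '' Y = X


/-- Topological conjugacy of subshifts: a homeomorphism commuting with the shifts. -/
def Conjugate [TopologicalSpace A] [TopologicalSpace B]
    (X : Set (ℤ → A)) (Y : Set (ℤ → B)) : Prop :=
  ∃ φ : X ≃ₜ Y, ∀ x x' : X, (x' : ℤ → A) = shift (x : ℤ → A) →
    (φ x' : ℤ → B) = shift (φ x : ℤ → B)

/-- The cylinder of a word of length `n` placed at positions `0,…,n-1`. -/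
def cylSet (n : ℕ) (w : Fin n → A) : Set (ℤ → A) :=
  { x | ∀ i : Fin n, x ((i : ℕ) : ℤ) = w i }

/-- Entropy of the partition of `A^ℤ` into cylinders of length `n`. -/
noncomputable def blockEntropy [Fintype A] [MeasurableSpace A]
    (μ : Measure (ℤ → A)) (n : ℕ) : ℝ :=
  ∑ w : Fin n → A, Real.negMulLog ((μ (cylSet n w)).toReal)

/-- Kolmogorov–Sinai entropy of a shift-invariant measure on `A^ℤ`,
computed with the natural (generating) partition into cylinders. -/
noncomputable def KSEntropy [Fintype A] [MeasurableSpace A]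
    (μ : Measure (ℤ → A)) : ℝ :=
  ⨅ n : ℕ, blockEntropy μ (n + 1) / (n + 1)

/-- A maximum measure: an ergodic shift-invariant Borel probability measure
carried by `X` whose Kolmogorov–Sinai entropy equals the topological entropy of `X`. -/
def IsMaxMeasure [Fintype A] [MeasurableSpace A]
    (X : Set (ℤ → A)) (μ : Measure (ℤ → A)) : Prop :=
  IsProbabilityMeasure μ ∧ μ Xᶜ = 0 ∧ Ergodic shift μ ∧ KSEntropy μ = hTop X

/-- The number of points of `X` fixed by the `n`-th power of the shift. -/
noncomputable def perCount (X : Set (ℤ → A)) (n : ℕ) : ℕ :=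
  Nat.card {x : ℤ → A | x ∈ X ∧ shift^[n] x = x}

open Topology Function

set_option autoImplicit false

section Words

variable {α : Type*}

@[simp]
lemma length_wordOf (c : ℕ → A) (m : ℕ) : (wordOf c m).length = m + 1 := by
  simp [wordOf]

@[simp]
lemma getElem_wordOf (c : ℕ → A) (m i : ℕ) (hi : i < (wordOf c m).length) :
    (wordOf c m)[i] = c (m - i) := by
  simp [wordOf]

lemma wordOf_succ (c : ℕ → A) (m : ℕ) : wordOf c (m + 1) = c (m + 1) :: wordOf c m := by
  refine List.ext_getElem (by simp) fun i _ _ => ?_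
  cases i with
  | zero => simp
  | succ i => simp [Nat.add_sub_add_right]

lemma wordOf_eq_wordOf_iff {c d : ℕ → A} {m : ℕ} :
    wordOf c m = wordOf d m ↔ ∀ j ≤ m, c j = d j := by
  constructor
  · intro h j hj
    have := congrArg (·[m - j]?) h
    simpa [wordOf, Nat.sub_sub_self hj, show m - j < m + 1 by omega] using this
  · intro h
    exact List.ext_getElem (by simp) fun i h₁ _ => by simpa using h (m - i) (by omega)

lemma map_wordOf (f : α → A) (c : ℕ → α) (m : ℕ) : (wordOf c m).map f = wordOf (f ∘ c) m := by
  simp [wordOf]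

lemma mem_wordOf (c : ℕ → A) {j m : ℕ} (hj : j ≤ m) : c j ∈ wordOf c m := by
  simpa [wordOf] using ⟨m - j, by omega, by rw [Nat.sub_sub_self hj]⟩

lemma exists_wordOf_eq {w : List A} (hw : w ≠ []) : ∃ c, wordOf c (w.length - 1) = w := by
  have hpos := List.length_pos_iff.mpr hw
  refine ⟨fun j => w.getD (w.length - 1 - j) (w.head hw), List.ext_getElem (by simp; omega)
    fun i _ _ => ?_⟩
  simp only [getElem_wordOf]
  rw [List.getD_eq_getElem _ _ (by omega)]
  congr 1
  omega

end Words

section Futures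

variable {X : Set (ℤ → A)}

def futures (X : Set (ℤ → A)) (c : ℕ → A) (n : ℕ) : Set (ℕ → A) :=
  (fun x (k : ℕ) => x k) '' {x ∈ X | ∀ j < n, x (-j) = c j}

lemma futures_mono (c : ℕ → A) {m n : ℕ} (h : m ≤ n) : futures X c n ⊆ futures X c m :=
  image_mono fun _ ⟨hx, hc⟩ => ⟨hx, fun j hj => hc j (by omega)⟩

lemma shift_image_eq_of_forall_iff {X : Set (ℤ → A)} (h : ∀ x, shift x ∈ X ↔ x ∈ X) :
    shift '' X = X := by
  ext x
  have hx : shift (fun i => x (i - 1)) = x := funext fun i => by simp [shift]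
  exact ⟨fun ⟨z, hz, hzx⟩ => hzx ▸ (h z).2 hz, fun hx' => ⟨_, (h _).1 (by rwa [hx]), hx⟩⟩

lemma shift_mem (hX : shift '' X = X) {x : ℤ → A} (hx : x ∈ X) : shift x ∈ X :=
  hX ▸ mem_image_of_mem _ hx

lemma translate_mem (hX : shift '' X = X) {x : ℤ → A} (hx : x ∈ X) (t : ℤ) :
    (fun i => x (i + t)) ∈ X := by
  induction t using Int.induction_on with
  | zero => simpa using hx
  | succ t ih =>
    convert shift_mem hX ih using 1
    funext i
    simp only [shift]
    ring_nf
  | pred t ih =>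
    obtain ⟨z, hz, hzx⟩ := hX.symm ▸ ih
    convert hz using 1
    funext i
    have := congrFun hzx (i - 1)
    simp only [shift, sub_add_cancel] at this
    rw [this]
    ring_nf

lemma fol_eq_futures (hX : shift '' X = X) (c : ℕ → A) (m : ℕ) :
    fol X (wordOf c m) = futures X c (m + 1) := by
  ext y
  constructor
  · rintro ⟨x, hx, hw, hy⟩
    refine ⟨fun i => x (i + m), ⟨translate_mem hX hx m, fun j hj => ?_⟩, funext fun k => ?_⟩
    · have := hw ⟨m - j, by simp only [length_wordOf]; omega⟩
      simp only [List.get_eq_getElem, getElem_wordOf, Nat.sub_sub_self (by omega : j ≤ m)] at this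
      rw [← this]
      dsimp only
      congr 1
      push_cast [Nat.cast_sub (by omega : j ≤ m)]
      ring
    · rw [hy k]
      simp only [length_wordOf]
      push_cast
      ring_nf
  · rintro ⟨x, ⟨hx, hc⟩, rfl⟩
    refine ⟨fun i => x (i + -m), translate_mem hX hx _, fun ⟨i, hi⟩ => ?_, fun k => ?_⟩
    · simp only [length_wordOf] at hi
      have := hc (m - i) (by omega)
      simp only [List.get_eq_getElem, getElem_wordOf]
      rw [← this]
      congr 1
      push_cast [Nat.cast_sub (by omega : i ≤ m)]
      ring
    · simp

lemma fol_nil (hX : shift '' X = X) (c : ℕ → A) : fol X [] = futures X c 0 := by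
  ext y
  constructor
  · rintro ⟨x, hx, -, hy⟩
    refine ⟨fun i => x (i + -1), ⟨translate_mem hX hx _, by simp⟩, funext fun k => ?_⟩
    simp [hy k, add_comm]
  · rintro ⟨x, ⟨hx, -⟩, rfl⟩
    exact ⟨fun i => x (i + 1), translate_mem hX hx _, by simp, fun k => by simp⟩

lemma fol_tail_wordOf (hX : shift '' X = X) (c : ℕ → A) (m : ℕ) :
    fol X (wordOf c m).tail = futures X c m := by
  cases m with
  | zero => simpa [wordOf] using fol_nil hX c
  | succ m => rw [wordOf_succ, List.tail_cons, fol_eq_futures hX]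

lemma isLeftConstraint_wordOf_iff (hX : shift '' X = X) (c : ℕ → A) (m : ℕ) :
    IsLeftConstraint X (wordOf c m) ↔
      (futures X c (m + 1)).Nonempty ∧ ¬ futures X c m ⊆ futures X c (m + 1) := by
  rw [IsLeftConstraint, fol_eq_futures hX, fol_tail_wordOf hX, ssubset_iff_subset_not_subset,
    ← nonempty_iff_ne_empty]
  have hne : wordOf c m ≠ [] := List.ne_nil_of_length_pos (by simp)
  simp [hne, futures_mono c (Nat.le_succ m)]

lemma not_isLeftConstraint_of_update_mem (hX : shift '' X = X) {c : ℕ → A} {m : ℕ}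
    (h : ∀ x ∈ X, (∀ j < m + 1, x (-j) = c j) → update x (-(m + 1 : ℕ)) (c (m + 1)) ∈ X) :
    ¬ IsLeftConstraint X (wordOf c (m + 1)) := by
  rw [isLeftConstraint_wordOf_iff hX]
  rintro ⟨-, hsub⟩
  refine hsub ?_
  rintro _ ⟨x, ⟨hx, hc⟩, rfl⟩
  refine ⟨_, ⟨h x hx hc, fun j hj => ?_⟩, funext fun k => ?_⟩
  · rcases Nat.lt_succ_iff_lt_or_eq.1 hj with hj | rfl
    · rw [update_of_ne (by omega)]
      exact hc j hj
    · simp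
  · exact update_of_ne (by omega) _ _

lemma LC_univ {n : ℕ} (hn : 2 ≤ n) : LC (univ : Set (ℤ → A)) n = ∅ := by
  refine eq_empty_of_forall_notMem fun w ⟨hlen, hc⟩ => ?_
  obtain ⟨c, hcw⟩ := exists_wordOf_eq hc.1
  rw [← hcw, show w.length - 1 = n - 2 + 1 by omega] at hc
  exact not_isLeftConstraint_of_update_mem (shift_image_eq_of_forall_iff fun _ => Iff.rfl)
    (fun _ _ _ => mem_univ _) hc

end Futures

section GrowthRate

noncomputable def growthRate (S : ℕ → Set (List A)) : ℝ :=
  limsup (fun n : ℕ => Real.log (Nat.card (S n)) / n) atTop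

lemma hC_eq_growthRate (X : Set (ℤ → A)) : hC X = growthRate (LC X) := by
  simp only [hC, growthRate, max_eq_right (Real.log_natCast_nonneg _)]

lemma log_natCast_le_log_natCast {a b : ℕ} (h : a ≤ b) : Real.log a ≤ Real.log b := by
  rcases a.eq_zero_or_pos with rfl | ha
  · simpa using Real.log_natCast_nonneg b
  · exact Real.log_le_log (by exact_mod_cast ha) (by exact_mod_cast h)

lemma finite_of_length_eq [Finite A] {S : Set (List A)} {n : ℕ} (hS : ∀ w ∈ S, w.length = n) :
    S.Finite :=
  (List.finite_length_eq A n).subset hS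

lemma card_le_pow_of_length_eq [Fintype A] {S : Set (List A)} {n : ℕ}
    (hS : ∀ w ∈ S, w.length = n) : Nat.card S ≤ Fintype.card A ^ n := by
  calc Nat.card S ≤ Nat.card (List.Vector A n) := Nat.card_mono (List.finite_length_eq A n) hS
    _ = Fintype.card A ^ n := by rw [Nat.card_eq_fintype_card, card_vector]

lemma log_card_div_le [Fintype A] {S : Set (List A)} {n : ℕ} (hS : ∀ w ∈ S, w.length = n) :
    Real.log (Nat.card S) / n ≤ Real.log (Fintype.card A) := by
  rcases n.eq_zero_or_pos with rfl | hn
  · simpa using Real.log_natCast_nonneg _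
  rw [div_le_iff₀ (by positivity), mul_comm, ← Real.log_pow]
  exact_mod_cast log_natCast_le_log_natCast (card_le_pow_of_length_eq hS)

lemma pow_card_le_card_of_forall_mem {α : Type*} {S : Set (List A)} (hS : S.Finite) (m : ℕ)
    (F : (ℕ → α) → List A) (hF : ∀ b b', F b = F b' → ∀ j ≤ m, b j = b' j)
    (hmem : ∀ b, F b ∈ S) : Nat.card α ^ (m + 1) ≤ Nat.card S := by
  have : Finite S := hS.to_subtype
  let g : (Fin (m + 1) → α) → S := fun v => ⟨F fun j => v (Fin.clamp j m), hmem _⟩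
  have hg : Injective g := fun v v' h => funext fun i => by
    simpa [Fin.clamp, Nat.min_eq_left (Nat.le_of_lt_succ i.2)] using
      hF _ _ (congrArg Subtype.val h) i (Nat.le_of_lt_succ i.2)
  simpa [Nat.card_fun] using Nat.card_le_card_of_injective g hg

variable {S T : ℕ → Set (List A)}

lemma growthRate_nonneg (S : ℕ → Set (List A)) : 0 ≤ growthRate S := by
  -- also when the sequence is unbounded, where `limsup` is the junk value `sInf ∅ = 0`
  rw [growthRate, limsup_eq]
  refine Real.sInf_nonneg fun a ha => ?_
  obtain ⟨n, hn⟩ := (ha : ∀ᶠ n in atTop, _ ≤ a).exists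
  exact (div_nonneg (Real.log_natCast_nonneg _) n.cast_nonneg).trans hn

lemma isCoboundedUnder_log_card_div (S : ℕ → Set (List A)) :
    IsCoboundedUnder (· ≤ ·) atTop fun n : ℕ => Real.log (Nat.card (S n)) / n :=
  isCoboundedUnder_le_of_le atTop fun n => div_nonneg (Real.log_natCast_nonneg _) n.cast_nonneg

lemma isBoundedUnder_log_card_div [Fintype A] (hS : ∀ n, ∀ w ∈ S n, w.length = n) :
    IsBoundedUnder (· ≤ ·) atTop fun n : ℕ => Real.log (Nat.card (S n)) / n :=
  isBoundedUnder_of ⟨_, fun n => log_card_div_le (hS n)⟩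

lemma growthRate_mono [Fintype A] (hT : ∀ n, ∀ w ∈ T n, w.length = n) (h : ∀ n, S n ⊆ T n) :
    growthRate S ≤ growthRate T :=
  limsup_le_limsup (Eventually.of_forall fun n => div_le_div_of_nonneg_right
      (log_natCast_le_log_natCast (Nat.card_mono (finite_of_length_eq (hT n)) (h n)))
      n.cast_nonneg)
    (isCoboundedUnder_log_card_div S) (isBoundedUnder_log_card_div hT)

lemma tendsto_log_add_one_div_atTop :
    Tendsto (fun n : ℕ => Real.log (n + 1) / n) atTop (𝓝 0) := by
  have := (Real.tendsto_pow_log_div_mul_add_atTop 1 (-1) 1 one_ne_zero).comp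
    (tendsto_atTop_add_const_right atTop 1 tendsto_natCast_atTop_atTop)
  refine this.congr fun n => ?_
  simp

lemma growthRate_le_log {r : ℕ} (hr : 0 < r)
    (h : ∀ᶠ n in atTop, Nat.card (S n) ≤ (n + 1) * r ^ n) : growthRate S ≤ Real.log r := by
  have hlim : Tendsto (fun n : ℕ => Real.log ((n + 1) * r ^ n : ℕ) / n) atTop
      (𝓝 (Real.log r)) := by
    refine (zero_add (Real.log r) ▸ tendsto_log_add_one_div_atTop.add_const _).congr' ?_
    filter_upwards [eventually_gt_atTop 0] with n hn
    push_cast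
    rw [Real.log_mul (by positivity) (by positivity), Real.log_pow]
    field_simp
  calc growthRate S ≤ limsup (fun n : ℕ => Real.log ((n + 1) * r ^ n : ℕ) / n) atTop :=
        limsup_le_limsup (h.mono fun n hn => div_le_div_of_nonneg_right
          (log_natCast_le_log_natCast hn) n.cast_nonneg)
          (isCoboundedUnder_log_card_div S) hlim.isBoundedUnder_le
    _ = Real.log r := hlim.limsup_eq

lemma log_le_growthRate [Fintype A] (hS : ∀ n, ∀ w ∈ S n, w.length = n) {r : ℕ}
    (h : ∀ᶠ n in atTop, r ^ (n - 1) ≤ Nat.card (S n)) : Real.log r ≤ growthRate S := by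
  have hlim : Tendsto (fun n : ℕ => Real.log (r ^ (n - 1) : ℕ) / n) atTop (𝓝 (Real.log r)) := by
    refine (sub_zero (Real.log r) ▸ tendsto_const_nhds.sub
      (tendsto_const_div_atTop_nhds_zero_nat (Real.log r))).congr' ?_
    filter_upwards [eventually_gt_atTop 0] with n hn
    rw [Nat.cast_pow, Real.log_pow, Nat.cast_sub hn]
    field_simp
    ring
  calc Real.log r = limsup (fun n : ℕ => Real.log (r ^ (n - 1) : ℕ) / n) atTop :=
        hlim.limsup_eq.symm
    _ ≤ growthRate S :=
        limsup_le_limsup (h.mono fun n hn => div_le_div_of_nonneg_right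
          (log_natCast_le_log_natCast hn) n.cast_nonneg)
          hlim.isBoundedUnder_ge.isCoboundedUnder_le (isBoundedUnder_log_card_div hS)

end GrowthRate

section EntropyInequalities

variable {X : Set (ℤ → A)}

lemma mem_Lang_iff_fol_nonempty {w : List A} : w ∈ Lang X w.length ↔ (fol X w).Nonempty := by
  constructor
  · rintro ⟨-, x, hx, hw⟩
    exact ⟨_, x, hx, fun i => by simpa using hw i, fun _ => rfl⟩
  · rintro ⟨-, x, hx, hw, -⟩
    exact ⟨rfl, x, hx, fun i => by simpa using hw i⟩

lemma LC_subset_Lang (X : Set (ℤ → A)) (n : ℕ) : LC X n ⊆ Lang X n := by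
  rintro w ⟨rfl, -, hw, -⟩
  exact mem_Lang_iff_fol_nonempty.2 (nonempty_iff_ne_empty.2 hw)

lemma ELC_subset_LC (X : Set (ℤ → A)) (n : ℕ) : ELC X n ⊆ LC X n := fun _ hw => ⟨hw.1, hw.2.1⟩

lemma hCstar_nonneg (X : Set (ℤ → A)) : 0 ≤ hCstar X := growthRate_nonneg _

lemma hCstar_le_hC [Fintype A] (X : Set (ℤ → A)) : hCstar X ≤ hC X :=
  hC_eq_growthRate X ▸ growthRate_mono (fun _ _ hw => hw.1) (ELC_subset_LC X)

lemma hC_le_hTop [Fintype A] (X : Set (ℤ → A)) : hC X ≤ hTop X :=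
  hC_eq_growthRate X ▸ growthRate_mono (fun _ _ hw => hw.1) (LC_subset_Lang X)

end EntropyInequalities

section Subshifts

variable {α : Type*}

lemma isClosed_setOf_comp [TopologicalSpace A] [DiscreteTopology A] {ι : Type*} [Finite ι]
    (s : ι → ℤ) (P : (ι → A) → Prop) : IsClosed {x : ℤ → A | P (x ∘ s)} :=
  (isClosed_discrete {v | P v}).preimage (continuous_pi fun i => continuous_apply (s i))

def mapShift (f : α → A) (X : Set (ℤ → α)) : Set (ℤ → A) := (fun x => f ∘ x) '' X

lemma isClosed_mapShift [TopologicalSpace α] [DiscreteTopology α] [Finite α]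
    [TopologicalSpace A] [T2Space A] (f : α → A) {X : Set (ℤ → α)} (hX : IsClosed X) :
    IsClosed (mapShift f X) :=
  (hX.isCompact.image (continuous_pi fun i =>
    continuous_of_discreteTopology.comp (continuous_apply i))).isClosed

lemma shift_image_mapShift (f : α → A) {X : Set (ℤ → α)} (hX : shift '' X = X) :
    shift '' mapShift f X = mapShift f X := by
  rw [mapShift, image_comm (f := shift) (g := fun x => f ∘ x) (g' := fun x => f ∘ x) (f' := shift)
    fun _ => rfl, hX]

lemma isSubshift_mapShift [TopologicalSpace α] [DiscreteTopology α] [Finite α]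
    [TopologicalSpace A] [T2Space A] (f : α → A) {X : Set (ℤ → α)}
    (hX : IsSubshift X) : IsSubshift (mapShift f X) :=
  ⟨isClosed_mapShift f hX.1, shift_image_mapShift f hX.2⟩

lemma isSubshift_union [TopologicalSpace A] {X Y : Set (ℤ → A)} (hX : IsSubshift X)
    (hY : IsSubshift Y) : IsSubshift (X ∪ Y) :=
  ⟨hX.1.union hY.1, by rw [image_union, hX.2, hY.2]⟩

end Subshifts

section MapShift

variable {α : Type*} {f : α → A} {X : Set (ℤ → α)}

lemma fol_mapShift (hf : Injective f) (X : Set (ℤ → α)) (w : List α) :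
    fol (mapShift f X) (w.map f) = (fun y => f ∘ y) '' fol X w := by
  ext y
  constructor
  · rintro ⟨_, ⟨x, hx, rfl⟩, hw, hy⟩
    refine ⟨fun k => x ((w.length : ℤ) - 1 + k), ⟨x, hx, fun i => hf ?_, fun _ => rfl⟩,
      funext fun k => by simp [hy]⟩
    simpa using hw ⟨i, by simp⟩
  · rintro ⟨_, ⟨x, hx, hw, hy⟩, rfl⟩
    exact ⟨f ∘ x, ⟨x, hx, rfl⟩, fun i => by simpa using congrArg f (hw ⟨i, by simpa using i.2⟩),
      fun k => by simp [hy]⟩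

lemma exists_map_eq_of_fol_mapShift_nonempty {w : List A}
    (h : (fol (mapShift f X) w).Nonempty) : ∃ w₀ : List α, w₀.map f = w := by
  obtain ⟨_, _, ⟨x, -, rfl⟩, hw, -⟩ := h
  exact ⟨List.ofFn fun i : Fin w.length => x i,
    List.ext_getElem (by simp) fun i _ _ => by simpa using hw ⟨i, by assumption⟩⟩

lemma isLeftConstraint_mapShift_iff (hf : Injective f) {w : List α} :
    IsLeftConstraint (mapShift f X) (w.map f) ↔ IsLeftConstraint X w := by
  simp only [IsLeftConstraint, ← List.map_tail, fol_mapShift hf, ssubset_iff_subset_not_subset,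
    image_subset_image_iff (hf.comp_left : Injective fun y : ℕ → α => f ∘ y), ne_eq,
    List.map_eq_nil_iff, image_eq_empty]

lemma LC_mapShift (hf : Injective f) (X : Set (ℤ → α)) (n : ℕ) :
    LC (mapShift f X) n = List.map f '' LC X n := by
  ext w
  constructor
  · rintro ⟨rfl, hw⟩
    obtain ⟨w₀, rfl⟩ := exists_map_eq_of_fol_mapShift_nonempty (nonempty_iff_ne_empty.2 hw.2.1)
    exact ⟨w₀, ⟨by simp, (isLeftConstraint_mapShift_iff hf).1 hw⟩, rfl⟩
  · rintro ⟨w₀, ⟨rfl, hw₀⟩, rfl⟩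
    exact ⟨by simp, (isLeftConstraint_mapShift_iff hf).2 hw₀⟩

lemma isExtendable_mapShift_iff (hf : Injective f) {w : List α} :
    IsExtendable (mapShift f X) (w.map f) ↔ IsExtendable X w := by
  rw [IsExtendable, IsExtendable, isLeftConstraint_mapShift_iff hf, List.length_map]
  refine and_congr_right fun _ => ⟨fun ⟨b, hb, hinf⟩ => ?_, fun ⟨b, hb, hinf⟩ => ?_⟩
  · have hrange : ∀ j, ∃ a, f a = b j := fun j => by
      obtain ⟨m, hm, hc⟩ := hinf j
      obtain ⟨v, hv⟩ := exists_map_eq_of_fol_mapShift_nonempty (nonempty_iff_ne_empty.2 hc.2.1)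
      obtain ⟨a, -, ha⟩ := List.mem_map.1 (hv ▸ mem_wordOf b hm)
      exact ⟨a, ha⟩
    choose b₀ hb₀ using hrange
    obtain rfl : f ∘ b₀ = b := funext hb₀
    refine ⟨b₀, (List.map_injective_iff.2 hf) (by rw [map_wordOf, hb]), fun N => ?_⟩
    obtain ⟨m, hm, hc⟩ := hinf N
    exact ⟨m, hm, (isLeftConstraint_mapShift_iff hf).1 (by rwa [map_wordOf])⟩
  · refine ⟨f ∘ b, by rw [← map_wordOf, hb], fun N => ?_⟩
    obtain ⟨m, hm, hc⟩ := hinf N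
    exact ⟨m, hm, by rw [← map_wordOf]; exact (isLeftConstraint_mapShift_iff hf).2 hc⟩

lemma ELC_mapShift (hf : Injective f) (X : Set (ℤ → α)) (n : ℕ) :
    ELC (mapShift f X) n = List.map f '' ELC X n := by
  ext w
  constructor
  · rintro ⟨rfl, hw⟩
    obtain ⟨w₀, rfl⟩ := exists_map_eq_of_fol_mapShift_nonempty (nonempty_iff_ne_empty.2 hw.1.2.1)
    exact ⟨w₀, ⟨by simp, (isExtendable_mapShift_iff hf).1 hw⟩, rfl⟩
  · rintro ⟨w₀, ⟨rfl, hw₀⟩, rfl⟩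
    exact ⟨by simp, (isExtendable_mapShift_iff hf).2 hw₀⟩

end MapShift

section Union

variable {α : Type*} {X Y : Set (ℤ → A)}

def letters (X : Set (ℤ → A)) : Set A := ⋃ x ∈ X, range x

lemma letters_mapShift_subset (f : α → A) (X : Set (ℤ → α)) :
    letters (mapShift f X) ⊆ range f := by
  intro a ha
  simp only [letters, mem_iUnion] at ha
  obtain ⟨_, ⟨x, -, rfl⟩, i, rfl⟩ := ha
  exact ⟨x i, rfl⟩

lemma mem_letters_of_fol_nonempty {w : List A} (h : (fol X w).Nonempty) {a : A} (ha : a ∈ w) :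
    a ∈ letters X := by
  obtain ⟨_, x, hx, hw, -⟩ := h
  obtain ⟨i, rfl⟩ := List.get_of_mem ha
  exact mem_biUnion hx ⟨i, hw i⟩

lemma fol_union (X Y : Set (ℤ → A)) (w : List A) : fol (X ∪ Y) w = fol X w ∪ fol Y w := by
  ext y
  simp only [fol, mem_union, mem_ofPred_eq, or_and_right, exists_or]

lemma fol_eq_empty_of_disjoint (h : Disjoint (letters X) (letters Y)) {v u : List A}
    (hv : (fol X v).Nonempty) {a : A} (hav : a ∈ v) (hau : a ∈ u) : fol Y u = ∅ :=
  not_nonempty_iff_eq_empty.1 fun hu =>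
    disjoint_left.1 h (mem_letters_of_fol_nonempty hv hav) (mem_letters_of_fol_nonempty hu hau)

lemma isLeftConstraint_union_left_iff (h : Disjoint (letters X) (letters Y)) {v : List A}
    (hv : v.tail ≠ []) (hX : (fol X v).Nonempty) :
    IsLeftConstraint (X ∪ Y) v ↔ IsLeftConstraint X v := by
  obtain ⟨a, ha⟩ := List.exists_mem_of_ne_nil _ hv
  have hY := fol_eq_empty_of_disjoint h hX (List.mem_of_mem_tail ha) (List.mem_of_mem_tail ha)
  have hY' := fol_eq_empty_of_disjoint h hX (List.mem_of_mem_tail ha) ha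
  simp only [IsLeftConstraint, fol_union, hY, hY', union_empty]

lemma isLeftConstraint_union_iff (h : Disjoint (letters X) (letters Y)) {v : List A}
    (hv : v.tail ≠ []) :
    IsLeftConstraint (X ∪ Y) v ↔ IsLeftConstraint X v ∨ IsLeftConstraint Y v := by
  refine ⟨fun hc => ?_, ?_⟩
  · obtain ⟨y, hy | hy⟩ := fol_union X Y v ▸ nonempty_iff_ne_empty.2 hc.2.1
    · exact Or.inl ((isLeftConstraint_union_left_iff h hv ⟨y, hy⟩).1 hc)
    · exact Or.inr ((isLeftConstraint_union_left_iff h.symm hv ⟨y, hy⟩).1 (union_comm X Y ▸ hc))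
  · rintro (hc | hc)
    · exact (isLeftConstraint_union_left_iff h hv (nonempty_iff_ne_empty.2 hc.2.1)).2 hc
    · exact union_comm Y X ▸
        (isLeftConstraint_union_left_iff h.symm hv (nonempty_iff_ne_empty.2 hc.2.1)).2 hc

lemma tail_ne_nil_of_two_le_length {w : List A} (hw : 2 ≤ w.length) : w.tail ≠ [] :=
  List.ne_nil_of_length_pos (by simp; omega)

lemma isExtendable_union_left_iff (h : Disjoint (letters X) (letters Y)) {w : List A}
    (hw : w.tail ≠ []) (hX : (fol X w).Nonempty) :
    IsExtendable (X ∪ Y) w ↔ IsExtendable X w := by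
  rw [IsExtendable, IsExtendable, isLeftConstraint_union_left_iff h hw hX]
  refine and_congr_right fun _ => exists_congr fun b => and_congr_right fun hb => ?_
  -- the words along the past `b` all contain the letter `b 0` of `w`, which is not in `Y`
  have hb₀ : b 0 ∈ w := hb ▸ mem_wordOf b (Nat.zero_le _)
  simp only [← ge_iff_le, ← frequently_atTop]
  refine frequently_congr ((eventually_ge_atTop 1).mono fun m hm => ?_)
  rw [isLeftConstraint_union_iff h (tail_ne_nil_of_two_le_length (by simp; omega)),
    or_iff_left fun hY => ?_]
  rw [IsLeftConstraint, fol_eq_empty_of_disjoint h hX hb₀ (mem_wordOf b (Nat.zero_le m))] at hY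
  exact hY.2.1 rfl

lemma LC_union (h : Disjoint (letters X) (letters Y)) {n : ℕ} (hn : 2 ≤ n) :
    LC (X ∪ Y) n = LC X n ∪ LC Y n := by
  ext w
  simp only [LC, mem_ofPred_eq, mem_union, ← and_or_left]
  exact and_congr_right fun hw =>
    isLeftConstraint_union_iff h (tail_ne_nil_of_two_le_length (hw ▸ hn))

lemma ELC_union (h : Disjoint (letters X) (letters Y)) {n : ℕ} (hn : 2 ≤ n) :
    ELC (X ∪ Y) n = ELC X n ∪ ELC Y n := by
  ext w
  simp only [ELC, mem_ofPred_eq, mem_union, ← and_or_left]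
  refine and_congr_right fun hw => ?_
  have hw := tail_ne_nil_of_two_le_length (hw ▸ hn)
  refine ⟨fun hc => ?_, ?_⟩
  · obtain ⟨y, hy | hy⟩ := fol_union X Y w ▸ nonempty_iff_ne_empty.2 hc.1.2.1
    · exact Or.inl ((isExtendable_union_left_iff h hw ⟨y, hy⟩).1 hc)
    · exact Or.inr ((isExtendable_union_left_iff h.symm hw ⟨y, hy⟩).1 (union_comm X Y ▸ hc))
  · rintro (hc | hc)
    · exact (isExtendable_union_left_iff h hw (nonempty_iff_ne_empty.2 hc.1.2.1)).2 hc
    · exact union_comm Y X ▸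
        (isExtendable_union_left_iff h.symm hw (nonempty_iff_ne_empty.2 hc.1.2.1)).2 hc

end Union

section SumShift

variable {α β : Type*} {X : Set (ℤ → α)} {Y : Set (ℤ → β)} {n : ℕ}

def sumShift (X : Set (ℤ → α)) (Y : Set (ℤ → β)) : Set (ℤ → α ⊕ β) :=
  mapShift Sum.inl X ∪ mapShift Sum.inr Y

lemma isSubshift_sumShift [TopologicalSpace α] [DiscreteTopology α] [Finite α]
    [TopologicalSpace β] [DiscreteTopology β] [Finite β] [TopologicalSpace (α ⊕ β)]
    [T2Space (α ⊕ β)] (hX : IsSubshift X) (hY : IsSubshift Y) :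
    IsSubshift (sumShift X Y) :=
  isSubshift_union (isSubshift_mapShift _ hX) (isSubshift_mapShift _ hY)

lemma disjoint_letters_sumShift :
    Disjoint (letters (mapShift Sum.inl X)) (letters (mapShift Sum.inr Y)) :=
  isCompl_range_inl_range_inr.disjoint.mono (letters_mapShift_subset _ _)
    (letters_mapShift_subset _ _)

lemma LC_sumShift (hn : 2 ≤ n) :
    LC (sumShift X Y) n = List.map Sum.inl '' LC X n ∪ List.map Sum.inr '' LC Y n := by
  rw [sumShift, LC_union disjoint_letters_sumShift hn, LC_mapShift Sum.inl_injective,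
    LC_mapShift Sum.inr_injective]

lemma ELC_sumShift (hn : 2 ≤ n) :
    ELC (sumShift X Y) n = List.map Sum.inl '' ELC X n ∪ List.map Sum.inr '' ELC Y n := by
  rw [sumShift, ELC_union disjoint_letters_sumShift hn, ELC_mapShift Sum.inl_injective,
    ELC_mapShift Sum.inr_injective]

lemma card_image_inl_union_le (S : Set (List α)) (T : Set (List β)) :
    Nat.card ↥(List.map Sum.inl '' S ∪ List.map Sum.inr '' T) ≤ Nat.card S + Nat.card T := by
  simp only [Nat.card_coe_set_eq]
  rw [← ncard_image_of_injective S (List.map_injective_iff.2 Sum.inl_injective),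
    ← ncard_image_of_injective T (List.map_injective_iff.2 Sum.inr_injective)]
  exact ncard_union_le _ _

lemma card_LC_sumShift_le (hn : 2 ≤ n) :
    Nat.card (LC (sumShift X Y) n) ≤ Nat.card (LC X n) + Nat.card (LC Y n) :=
  LC_sumShift hn ▸ card_image_inl_union_le _ _

lemma card_ELC_sumShift_le (hn : 2 ≤ n) :
    Nat.card (ELC (sumShift X Y) n) ≤ Nat.card (ELC X n) + Nat.card (ELC Y n) :=
  ELC_sumShift hn ▸ card_image_inl_union_le _ _

variable [Finite α] [Finite β]

lemma card_LC_le_card_LC_sumShift_left (hn : 2 ≤ n) :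
    Nat.card (LC X n) ≤ Nat.card (LC (sumShift X Y) n) := by
  have hfin := finite_of_length_eq (S := LC (sumShift X Y) n) fun _ hw => hw.1
  rw [LC_sumShift hn] at hfin ⊢
  rw [← Nat.card_image_of_injective (List.map_injective_iff.2 Sum.inl_injective)]
  exact Nat.card_mono hfin subset_union_left

lemma card_LC_le_card_LC_sumShift_right (hn : 2 ≤ n) :
    Nat.card (LC Y n) ≤ Nat.card (LC (sumShift X Y) n) := by
  have hfin := finite_of_length_eq (S := LC (sumShift X Y) n) fun _ hw => hw.1
  rw [LC_sumShift hn] at hfin ⊢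
  rw [← Nat.card_image_of_injective (List.map_injective_iff.2 Sum.inr_injective)]
  exact Nat.card_mono hfin subset_union_right

lemma card_ELC_le_card_ELC_sumShift_left (hn : 2 ≤ n) :
    Nat.card (ELC X n) ≤ Nat.card (ELC (sumShift X Y) n) := by
  have hfin := finite_of_length_eq (S := ELC (sumShift X Y) n) fun _ hw => hw.1
  rw [ELC_sumShift hn] at hfin ⊢
  rw [← Nat.card_image_of_injective (List.map_injective_iff.2 Sum.inl_injective)]
  exact Nat.card_mono hfin subset_union_left

end SumShift

section MarkerShift

variable {α : Type*}

def markerShift (α : Type*) : Set (ℤ → Option α) :=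
  {x | ∀ p q, x p = none → x q = none → p = q}

lemma shift_mem_markerShift_iff {x : ℤ → Option α} :
    shift x ∈ markerShift α ↔ x ∈ markerShift α :=
  ⟨fun h p q hp hq => by
    have := h (p - 1) (q - 1) (by simpa [shift] using hp) (by simpa [shift] using hq)
    omega,
   fun h p q hp hq => by have := h _ _ hp hq; omega⟩

lemma shift_image_markerShift : shift '' markerShift α = markerShift α :=
  shift_image_eq_of_forall_iff fun _ => shift_mem_markerShift_iff

lemma isClosed_markerShift [TopologicalSpace (Option α)] [DiscreteTopology (Option α)] :
    IsClosed (markerShift α) := by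
  simp only [markerShift, ofPred_forall]
  exact isClosed_iInter fun p => isClosed_iInter fun q =>
    isClosed_setOf_comp ![p, q] fun v => v 0 = none → v 1 = none → p = q

lemma isSubshift_markerShift :
    letI : TopologicalSpace (Option α) := ⊥
    IsSubshift (markerShift α) :=
  let : TopologicalSpace (Option α) := ⊥
  have : DiscreteTopology (Option α) := ⟨rfl⟩
  ⟨isClosed_markerShift, shift_image_markerShift⟩

lemma rev_markerShift : rev (markerShift α) = markerShift α := by
  have key : ∀ x ∈ markerShift α, (fun n => x (-n)) ∈ markerShift α :=
    fun x hx p q hp hq => neg_inj.1 (hx _ _ hp hq)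
  exact Subset.antisymm (image_subset_iff.2 key) fun x hx => ⟨_, key x hx, funext fun n => by simp⟩

lemma update_mem_markerShift (d : ℤ → α) (p : ℤ) :
    update (fun i => some (d i)) p none ∈ markerShift α := fun q r hq hr => by
  simp only [update_apply] at hq hr
  split_ifs at hq hr with h₁ h₂
  exact h₁.trans h₂.symm

lemma isLeftConstraint_markerShift_cons (b : ℕ → α) (m : ℕ) :
    IsLeftConstraint (markerShift α) (none :: wordOf (some ∘ b) m) := by
  set c := update (some ∘ b) (m + 1) none
  have hc : ∀ j ≤ m, c j = some (b j) := fun j hj => update_of_ne (by omega) _ _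
  have hw : none :: wordOf (some ∘ b) m = wordOf c (m + 1) := by
    rw [wordOf_succ, wordOf_eq_wordOf_iff.2 hc]
    simp [c]
    rfl
  rw [hw, isLeftConstraint_wordOf_iff shift_image_markerShift]
  refine ⟨⟨_, _, ⟨update_mem_markerShift (fun i => b i.natAbs) (-(m + 1 : ℕ)), fun j hj => ?_⟩,
    rfl⟩, fun hsub => ?_⟩
  · rcases Nat.lt_succ_iff_lt_or_eq.1 hj with hj | rfl
    · rw [update_of_ne (by omega), hc j (by omega)]
      simp
    · simp [c]
  -- a future with a marker at `1` fits the tail of the word but not its leading marker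
  obtain ⟨x, ⟨hx, hxc⟩, hxy⟩ := hsub ⟨_, ⟨update_mem_markerShift (fun i => b i.natAbs) 1,
    fun j hj => by rw [update_of_ne (by omega), hc j (by omega)]; simp⟩, rfl⟩
  have h₁ : x 1 = none := by simpa using congrFun hxy 1
  have h₂ : x (-(m + 1 : ℕ)) = none := by simpa [c] using hxc (m + 1) (by omega)
  have := hx _ _ h₁ h₂
  omega

lemma not_isLeftConstraint_markerShift {c : ℕ → Option α} {m : ℕ} (hc : c (m + 1) ≠ none) :
    ¬ IsLeftConstraint (markerShift α) (wordOf c (m + 1)) := by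
  refine not_isLeftConstraint_of_update_mem shift_image_markerShift fun x hx _ p q hp hq => ?_
  simp only [update_apply] at hp hq
  split_ifs at hp hq
  exacts [absurd hp hc, absurd hp hc, absurd hq hc, hx p q hp hq]

lemma ELC_markerShift {n : ℕ} (hn : 2 ≤ n) : ELC (markerShift α) n = ∅ := by
  refine eq_empty_of_forall_notMem fun w ⟨hlen, hw, b, hb, hinf⟩ => ?_
  have head : ∀ k, 1 ≤ k → IsLeftConstraint (markerShift α) (wordOf b k) → b k = none :=
    fun k hk h => by
      obtain ⟨k, rfl⟩ := Nat.exists_eq_add_of_le' hk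
      by_contra hne
      exact not_isLeftConstraint_markerShift hne h
  -- `w` and a longer left constraint along the same past both start with a marker
  obtain ⟨m, hm, hcm⟩ := hinf n
  have h₁ := head (w.length - 1) (by omega) (by rwa [hb])
  obtain ⟨_, ⟨x, ⟨hx, hxb⟩, rfl⟩⟩ :=
    ((isLeftConstraint_wordOf_iff shift_image_markerShift b m).1 hcm).1
  have := hx _ _ ((hxb _ (by omega)).trans h₁) ((hxb m (by omega)).trans (head m (by omega) hcm))
  omega

lemma card_le_of_at_most_one_none [Fintype α] [Nonempty α] {S : Set (List (Option α))}
    {n : ℕ} (hS : ∀ w ∈ S, w.length = n ∧ ∀ i j (hi : i < w.length) (hj : j < w.length),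
      w[i] = none → w[j] = none → i = j) :
    Nat.card S ≤ (n + 1) * Fintype.card α ^ n := by
  let a : α := Classical.arbitrary α
  let φ : Option (Fin n) × (Fin n → α) → List (Option α) := fun iv =>
    List.ofFn fun j => if iv.1 = some j then none else some (iv.2 j)
  have hsub : S ⊆ range φ := by
    intro w hw
    obtain ⟨rfl, huniq⟩ := hS w hw
    have hsome : ∀ j : Fin w.length, w[j] ≠ none → some ((w[j]).getD a) = w[j] :=
      fun j h => Option.getD_of_ne_none h a
    by_cases h : ∃ j : Fin w.length, w[j] = none
    · obtain ⟨j₀, hj₀⟩ := h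
      refine ⟨(some j₀, fun j => (w[j]).getD a), List.ext_getElem (by simp [φ]) fun j h₁ h₂ => ?_⟩
      simp only [φ, List.getElem_ofFn]
      split_ifs with h
      · obtain rfl : (j₀ : ℕ) = j := congrArg Fin.val (Option.some_injective _ h)
        simpa using hj₀.symm
      · exact hsome ⟨j, h₂⟩ fun hj => h (congrArg some (Fin.ext (huniq _ _ _ _ hj₀ hj)))
    · refine ⟨(none, fun j => (w[j]).getD a), List.ext_getElem (by simp [φ]) fun j h₁ h₂ => ?_⟩
      simp only [φ, List.getElem_ofFn, reduceCtorEq, if_false]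
      exact hsome ⟨j, h₂⟩ fun hj => h ⟨⟨j, h₂⟩, hj⟩
  calc Nat.card S ≤ Nat.card (range φ) := Nat.card_mono (finite_range φ) hsub
    _ ≤ Nat.card (Option (Fin n) × (Fin n → α)) := Finite.card_range_le φ
    _ = (n + 1) * Fintype.card α ^ n := by simp [Nat.card_eq_fintype_card]

lemma card_Lang_markerShift_le [Fintype α] [Nonempty α] (n : ℕ) :
    Nat.card (Lang (markerShift α) n) ≤ (n + 1) * Fintype.card α ^ n :=
  card_le_of_at_most_one_none fun _ ⟨hlen, x, hx, hw⟩ => ⟨hlen, fun i j hi hj h₁ h₂ => by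
    simpa using hx _ _ ((hw ⟨i, hi⟩).trans h₁) ((hw ⟨j, hj⟩).trans h₂)⟩

lemma pow_card_le_card_LC_markerShift [Finite α] (m : ℕ) :
    Nat.card α ^ (m + 1) ≤ Nat.card (LC (markerShift α) (m + 2)) :=
  pow_card_le_card_of_forall_mem (finite_of_length_eq fun _ hw => hw.1) m
    (fun b => none :: wordOf (some ∘ b) m)
    (fun _ _ h j hj =>
      Option.some_injective _ (wordOf_eq_wordOf_iff.1 (List.cons_injective h) j hj))
    fun b => ⟨by simp, isLeftConstraint_markerShift_cons b m⟩

lemma hCstar_markerShift : hCstar (markerShift α) = 0 := by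
  refine le_antisymm ?_ (hCstar_nonneg _)
  exact (growthRate_le_log (S := ELC (markerShift α)) one_pos
    ((eventually_ge_atTop 2).mono fun n hn => by simp [ELC_markerShift hn])).trans_eq (by simp)

lemma log_card_le_hC_markerShift [Fintype α] :
    Real.log (Fintype.card α) ≤ hC (markerShift α) := by
  rw [hC_eq_growthRate]
  refine log_le_growthRate (fun _ _ hw => hw.1) ((eventually_ge_atTop 2).mono fun n hn => ?_)
  obtain ⟨m, rfl⟩ := Nat.exists_eq_add_of_le' hn
  simpa [Nat.card_eq_fintype_card] using pow_card_le_card_LC_markerShift (α := α) m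

lemma hTop_markerShift_le [Fintype α] [Nonempty α] :
    hTop (markerShift α) ≤ Real.log (Fintype.card α) :=
  growthRate_le_log Fintype.card_pos (Eventually.of_forall card_Lang_markerShift_le)

lemma isWeakQFT_and_not_isQFT_markerShift [Fintype α] [Nontrivial α] :
    letI : TopologicalSpace (Option α) := ⊥
    IsWeakQFT (markerShift α) ∧ ¬ IsQFT (markerShift α) := by
  have hTop_le_hC : hTop (markerShift α) ≤ hC (markerShift α) :=
    hTop_markerShift_le.trans log_card_le_hC_markerShift
  refine ⟨⟨isSubshift_markerShift, ?_⟩, fun ⟨_, h⟩ => ?_⟩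
  · calc hSCstar (markerShift α) ≤ hCstar (markerShift α) := min_le_left _ _
      _ = 0 := hCstar_markerShift
      _ < Real.log (Fintype.card α) := Real.log_pos (by exact_mod_cast Fintype.one_lt_card)
      _ ≤ hTop (markerShift α) := log_card_le_hC_markerShift.trans (hC_le_hTop _)
  · rw [hSC, rev_markerShift, min_self] at h
    exact h.not_ge hTop_le_hC

end MarkerShift

section MirrorShift

variable {α : Type*}

def mirrorShift (α : Type*) : Set (ℤ → Option α) :=
  {x ∈ markerShift α | ∀ p j, x p = none → x (p + j) = x (p - j)}

lemma shift_image_mirrorShift : shift '' mirrorShift α = mirrorShift α := by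
  refine shift_image_eq_of_forall_iff fun x =>
    and_congr shift_mem_markerShift_iff ⟨fun h p j hp => ?_, fun h p j hp => ?_⟩
  · have := h (p - 1) j (by simpa [shift] using hp)
    simp only [shift] at this
    convert this using 2 <;> ring
  · simp only [shift]
    convert h (p + 1) j hp using 2 <;> ring

lemma isClosed_mirrorShift [TopologicalSpace (Option α)] [DiscreteTopology (Option α)] :
    IsClosed (mirrorShift α) := by
  show IsClosed (markerShift α ∩ {x | ∀ p j, x p = none → x (p + j) = x (p - j)})
  refine isClosed_markerShift.inter ?_
  simp only [ofPred_forall]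
  exact isClosed_iInter fun p => isClosed_iInter fun j =>
    isClosed_setOf_comp ![p, p + j, p - j] fun v => v 0 = none → v 1 = v 2

-- `d` on `(-∞, p)`, reflected about a marker at `p`
def mirrorAt (d : ℤ → Option α) (p : ℤ) : ℤ → Option α :=
  fun i => if i = p then none else d (p - |i - p|)

lemma mirrorAt_mem_mirrorShift {d : ℤ → Option α} (hd : ∀ i, d i ≠ none) (p : ℤ) :
    mirrorAt d p ∈ mirrorShift α := by
  have hnone : ∀ i, mirrorAt d p i = none → i = p := fun i hi => by
    by_contra h
    exact hd _ (by simpa [mirrorAt, h] using hi)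
  refine ⟨fun q r hq hr => (hnone q hq).trans (hnone r hr).symm, fun q j hq => ?_⟩
  obtain rfl := hnone q hq
  simp [mirrorAt]

lemma some_mem_mirrorShift (d : ℤ → α) : (fun i => some (d i)) ∈ mirrorShift α :=
  ⟨fun p _ hp => by simp at hp, fun p _ hp => by simp at hp⟩

lemma isLeftConstraint_mirrorShift [Nontrivial α] (b : ℕ → α) (m : ℕ) :
    IsLeftConstraint (mirrorShift α) (wordOf (some ∘ b) m) := by
  obtain ⟨a, ha⟩ := exists_ne (b m)
  rw [isLeftConstraint_wordOf_iff shift_image_mirrorShift]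
  refine ⟨⟨_, _, ⟨some_mem_mirrorShift fun i => b i.natAbs, fun j _ => by simp⟩, rfl⟩,
    fun hsub => ?_⟩
  set d : ℤ → Option α := fun i => some (update b m a i.natAbs)
  have hd : ∀ j : ℕ, mirrorAt d 1 (-j) = some (update b m a j) := fun j => by
    rw [mirrorAt, if_neg (by omega), abs_of_nonpos (by omega)]
    simp [d]
  have hmem := mirrorAt_mem_mirrorShift (d := d) (by simp [d]) 1
  obtain ⟨x, ⟨hx, hxb⟩, hxy⟩ := hsub
    ⟨mirrorAt d 1, ⟨hmem, fun j hj => by rw [hd, update_of_ne (by omega)]; rfl⟩, rfl⟩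
  have h₁ : x 1 = none := by simpa [mirrorAt] using congrFun hxy 1
  -- the marker at `1` reflects the first letter of the word, at `-m`, to `m + 2`
  have hx₂ : x (m + 2) = x (-m) := by convert hx.2 1 (m + 1) h₁ using 2 <;> ring
  have hd₂ : mirrorAt d 1 (m + 2) = mirrorAt d 1 (-m) := by
    convert hmem.2 1 (m + 1) (if_pos rfl) using 2 <;> ring
  have hfut : x (m + 2) = mirrorAt d 1 (m + 2) := by exact_mod_cast congrFun hxy (m + 2)
  have : (some ∘ b) m = some a := by
    rw [← hxb m (by omega), ← hx₂, hfut, hd₂, hd, update_self]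
  exact ha (Option.some_injective _ this).symm

lemma isExtendable_mirrorShift [Nontrivial α] (b : ℕ → α) (m : ℕ) :
    IsExtendable (mirrorShift α) (wordOf (some ∘ b) m) :=
  ⟨isLeftConstraint_mirrorShift b m, some ∘ b, by simp,
    fun N => ⟨N, le_rfl, isLeftConstraint_mirrorShift b N⟩⟩

lemma pow_card_le_card_ELC_mirrorShift [Finite α] [Nontrivial α] (m : ℕ) :
    Nat.card α ^ (m + 1) ≤ Nat.card (ELC (mirrorShift α) (m + 1)) :=
  pow_card_le_card_of_forall_mem (finite_of_length_eq fun _ hw => hw.1) m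
    (fun b => wordOf (some ∘ b) m)
    (fun _ _ h j hj => Option.some_injective _ (wordOf_eq_wordOf_iff.1 h j hj))
    fun b => ⟨by simp, isExtendable_mirrorShift b m⟩

end MirrorShift

section MirrorMarkerFullShift

def mirrorMarkerFullShift : Set (ℤ → (Option Bool ⊕ Option (Fin 4)) ⊕ Fin 8) :=
  sumShift (sumShift (mirrorShift Bool) (markerShift (Fin 4))) univ

lemma isSubshift_mirrorMarkerFullShift :
    letI : TopologicalSpace ((Option Bool ⊕ Option (Fin 4)) ⊕ Fin 8) := ⊥
    IsSubshift mirrorMarkerFullShift := by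
  let : TopologicalSpace (Option Bool) := ⊥
  let : TopologicalSpace (Option (Fin 4)) := ⊥
  let : TopologicalSpace (Option Bool ⊕ Option (Fin 4)) := ⊥
  let : TopologicalSpace ((Option Bool ⊕ Option (Fin 4)) ⊕ Fin 8) := ⊥
  have : DiscreteTopology (Option Bool) := ⟨rfl⟩
  have : DiscreteTopology (Option (Fin 4)) := ⟨rfl⟩
  have : DiscreteTopology (Option Bool ⊕ Option (Fin 4)) := ⟨rfl⟩
  have : DiscreteTopology ((Option Bool ⊕ Option (Fin 4)) ⊕ Fin 8) := ⟨rfl⟩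
  exact isSubshift_sumShift
    (isSubshift_sumShift ⟨isClosed_mirrorShift, shift_image_mirrorShift⟩
      ⟨isClosed_markerShift, shift_image_markerShift⟩)
    ⟨isClosed_univ, shift_image_eq_of_forall_iff fun _ => Iff.rfl⟩

lemma log_two_le_hCstar_mirrorMarkerFullShift : Real.log 2 ≤ hCstar mirrorMarkerFullShift := by
  refine log_le_growthRate (fun _ _ hw => hw.1) ((eventually_ge_atTop 2).mono fun n hn => ?_)
  obtain ⟨m, rfl⟩ := Nat.exists_eq_add_of_le' (by omega : 1 ≤ n)
  calc 2 ^ (m + 1 - 1) ≤ 2 ^ (m + 1) := Nat.pow_le_pow_right two_pos (by omega)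
    _ ≤ Nat.card (ELC (mirrorShift Bool) (m + 1)) := by
      simpa using pow_card_le_card_ELC_mirrorShift (α := Bool) m
    _ ≤ _ := (card_ELC_le_card_ELC_sumShift_left hn).trans (card_ELC_le_card_ELC_sumShift_left hn)

lemma hCstar_mirrorMarkerFullShift_le_log_three :
    hCstar mirrorMarkerFullShift ≤ Real.log 3 := by
  refine growthRate_le_log three_pos ((eventually_ge_atTop 2).mono fun n hn => ?_)
  calc Nat.card (ELC mirrorMarkerFullShift n)
      ≤ Nat.card (ELC (mirrorShift Bool) n) + Nat.card (ELC (markerShift (Fin 4)) n) +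
          Nat.card (ELC (univ : Set (ℤ → Fin 8)) n) :=
        (card_ELC_sumShift_le hn).trans (Nat.add_le_add_right (card_ELC_sumShift_le hn) _)
    _ ≤ 3 ^ n + 0 + 0 := by
      gcongr
      · exact card_le_pow_of_length_eq (fun _ hw => hw.1)
      · simp [ELC_markerShift hn]
      · simp [eq_empty_of_subset_empty ((ELC_subset_LC _ n).trans (LC_univ hn).subset)]
    _ ≤ (n + 1) * 3 ^ n := by nlinarith [Nat.one_le_pow n 3 three_pos]

lemma log_four_le_hC_mirrorMarkerFullShift : Real.log 4 ≤ hC mirrorMarkerFullShift := by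
  rw [hC_eq_growthRate]
  refine log_le_growthRate (fun _ _ hw => hw.1) ((eventually_ge_atTop 2).mono fun n hn => ?_)
  obtain ⟨m, rfl⟩ := Nat.exists_eq_add_of_le' hn
  calc 4 ^ (m + 2 - 1) ≤ Nat.card (LC (markerShift (Fin 4)) (m + 2)) := by
        simpa using pow_card_le_card_LC_markerShift (α := Fin 4) m
    _ ≤ _ := (card_LC_le_card_LC_sumShift_right hn).trans (card_LC_le_card_LC_sumShift_left hn)

lemma hC_mirrorMarkerFullShift_le_log_five : hC mirrorMarkerFullShift ≤ Real.log 5 := by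
  rw [hC_eq_growthRate]
  refine growthRate_le_log (by norm_num) ((eventually_ge_atTop 2).mono fun n hn => ?_)
  calc Nat.card (LC mirrorMarkerFullShift n)
      ≤ Nat.card (LC (mirrorShift Bool) n) + Nat.card (LC (markerShift (Fin 4)) n) +
          Nat.card (LC (univ : Set (ℤ → Fin 8)) n) :=
        (card_LC_sumShift_le hn).trans (Nat.add_le_add_right (card_LC_sumShift_le hn) _)
    _ ≤ 3 ^ n + 5 ^ n + 0 := by
      gcongr
      · exact card_le_pow_of_length_eq (fun _ hw => hw.1)
      · exact card_le_pow_of_length_eq (fun _ hw => hw.1)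
      · simp [LC_univ hn]
    _ ≤ (n + 1) * 5 ^ n := by
      nlinarith [Nat.pow_le_pow_left (show 3 ≤ 5 by norm_num) n, Nat.one_le_pow n 5 (by norm_num)]

lemma wordOf_inr_mem_Lang_mirrorMarkerFullShift (b : ℕ → Fin 8) (m : ℕ) :
    wordOf (Sum.inr ∘ b) m ∈ Lang mirrorMarkerFullShift (m + 1) := by
  refine ⟨by simp, fun i => Sum.inr (b (m - i).toNat),
    Or.inr ⟨fun i => b (m - i).toNat, mem_univ _, rfl⟩, fun i => ?_⟩
  simp [List.get_eq_getElem]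

lemma log_eight_le_hTop_mirrorMarkerFullShift : Real.log 8 ≤ hTop mirrorMarkerFullShift := by
  refine log_le_growthRate (fun _ _ hw => hw.1) ((eventually_ge_atTop 1).mono fun n hn => ?_)
  obtain ⟨m, rfl⟩ := Nat.exists_eq_add_of_le' hn
  have := pow_card_le_card_of_forall_mem (finite_of_length_eq fun _ hw => hw.1) m _
    (fun _ _ h j hj => Sum.inr_injective (wordOf_eq_wordOf_iff.1 h j hj))
    (wordOf_inr_mem_Lang_mirrorMarkerFullShift · m)
  exact (Nat.pow_le_pow_right (n := 8) (by norm_num) (by omega : m + 1 - 1 ≤ m + 1)).trans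
    (by simpa using this)

end MirrorMarkerFullShift

/-- For every subshift, `0 ≤ h*_𝒞(X) ≤ h_𝒞(X) ≤ h_top(X)`;
there is a subshift for which all three inequalities are strict; and there are
weak-QFT subshifts which are not QFT. -/
theorem constraint_entropy_inequalities :
    (∀ (A : Type) [Fintype A] [TopologicalSpace A] [DiscreteTopology A]
        (X : Set (ℤ → A)), IsSubshift X →
          0 ≤ hCstar X ∧ hCstar X ≤ hC X ∧ hC X ≤ hTop X) ∧
    (∃ (A : Type) (_ : Fintype A) (X : Set (ℤ → A)),
        (letI : TopologicalSpace A := ⊥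
         IsSubshift X) ∧
        0 < hCstar X ∧ hCstar X < hC X ∧ hC X < hTop X) ∧
    (∃ (A : Type) (_ : Fintype A) (X : Set (ℤ → A)),
        letI : TopologicalSpace A := ⊥
        IsWeakQFT X ∧ ¬ IsQFT X) := by
  refine ⟨fun A _ _ _ X _ => ⟨hCstar_nonneg X, hCstar_le_hC X, hC_le_hTop X⟩,
    ⟨_, inferInstance, mirrorMarkerFullShift, isSubshift_mirrorMarkerFullShift, ?_, ?_, ?_⟩,
    ⟨_, inferInstance, markerShift (Fin 4), isWeakQFT_and_not_isQFT_markerShift⟩⟩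
  · exact (Real.log_pos one_lt_two).trans_le log_two_le_hCstar_mirrorMarkerFullShift
  · exact hCstar_mirrorMarkerFullShift_le_log_three.trans_lt
      ((Real.log_lt_log (by norm_num) (by norm_num)).trans_le log_four_le_hC_mirrorMarkerFullShift)
  · exact hC_mirrorMarkerFullShift_le_log_five.trans_lt
      ((Real.log_lt_log (by norm_num) (by norm_num)).trans_le
        log_eight_le_hTop_mirrorMarkerFullShift)

end QFTPaper
end

section
/- Let Σ be a coded system such that the set of sequences in Σ containing no occurrence of any synchronizing word is a subshift whose topological entropy is strictly less than h_top(Σ). Then Σ is a weak-QFT. -/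
open Filter Set MeasureTheory

namespace QFTPaper

variable {A : Type*} {B : Type*}

/-- `x` is a bi-infinite concatenation of words from `W`: there is a
bi-infinite increasing unbounded sequence of cutting points such that each
block between consecutive cutting points is a word of `W`. -/
def IsConcatenation (W : Set (List A)) (x : ℤ → A) : Prop :=
  ∃ t : ℤ → ℤ, StrictMono t ∧ (∀ M : ℤ, ∃ i, t i ≤ M) ∧ (∀ M : ℤ, ∃ i, M ≤ t i) ∧
    ∀ i : ℤ, ∃ w ∈ W, (w.length : ℤ) = t (i + 1) - t i ∧ OccursAt w x (t i)

/-- A coded system: a subshift which is the closure of the set of all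
bi-infinite concatenations of words from some countable set of finite words. -/
def IsCoded [TopologicalSpace A] (X : Set (ℤ → A)) : Prop :=
  IsSubshift X ∧
  ∃ W : Set (List A), W.Countable ∧ X = closure { x : ℤ → A | IsConcatenation W x }

/-- `v` is a synchronizing word of `X`: it occurs in `X` and
`fol(uvw) = fol(vw)` whenever `uvw` occurs in `X`. -/
def IsSynchronizing (X : Set (ℤ → A)) (v : List A) : Prop :=
  v ∈ Lang X v.length ∧
  ∀ u w : List A, (u ++ v ++ w) ∈ Lang X (u ++ v ++ w).length →
    fol X (u ++ v ++ w) = fol X (v ++ w)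

/-- The set of sequences of `X` containing no occurrence of any synchronizing
word. -/
def NoSync (X : Set (ℤ → A)) : Set (ℤ → A) :=
  { x ∈ X | ∀ v : List A, IsSynchronizing X v → ∀ k : ℤ, ¬ OccursAt v x k }

/-!
A synchronizing word inside the tail of a left constraint `a :: t` would force
`fol (a :: t) = fol t`. So the one-sided past of an extendable left constraint contains no
synchronizing word, and by compactness it is the past of a point of `X`: the tail of an extendable
left constraint of length `n + 1` is a word of length `n` ending a synchronizing-free past. These
words form a submultiplicative family, whose growth rate `L` bounds `h*_𝒞(X)` from above.
Conversely, if the past is required to be synchronizing-free for `m` further letters beyond the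
word, then for `m` large only words extending (by compactness again) to points of `NoSync X` are
left; splitting words of length `n + m` after `n` letters gives `L ≤ log #ℒ(NoSync X, n) / n`
for every `n`, hence `L ≤ h_top(NoSync X)`.
-/

open Topology

lemma log_natCast_le_of_le {p q : ℕ} (h : p ≤ q) : Real.log p ≤ Real.log q := by
  rcases p.eq_zero_or_pos with rfl | hp
  · simpa using Real.log_natCast_nonneg q
  · exact Real.log_le_log (by exact_mod_cast hp) (by exact_mod_cast h)

lemma log_natCast_le_add_of_le_mul {p q r : ℕ} (h : p ≤ q * r) :
    Real.log p ≤ Real.log q + Real.log r := by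
  by_cases hqr : q = 0 ∨ r = 0
  · have hp : p = 0 := by rcases hqr with rfl | rfl <;> simpa using h
    simpa [hp] using add_nonneg (Real.log_natCast_nonneg q) (Real.log_natCast_nonneg r)
  · push Not at hqr
    calc Real.log p ≤ Real.log (q * r : ℕ) := log_natCast_le_of_le h
      _ = Real.log q + Real.log r := by
        push_cast
        exact Real.log_mul (by exact_mod_cast hqr.1) (by exact_mod_cast hqr.2)

lemma card_le_mul_of_subset_image {α β γ : Type*} {S : Set γ} {T : Set α} {U : Set β}
    (f : α × β → γ) (h : S ⊆ f '' (T ×ˢ U)) (hT : T.Finite) (hU : U.Finite) :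
    Nat.card S ≤ Nat.card T * Nat.card U := by
  simp only [Nat.card_coe_set_eq]
  calc S.ncard ≤ (f '' (T ×ˢ U)).ncard := Set.ncard_le_ncard h ((hT.prod hU).image f)
    _ ≤ (T ×ˢ U).ncard := Set.ncard_image_le (hT.prod hU)
    _ = T.ncard * U.ncard := Set.ncard_prod

/-- Iterating the step gives `L (m₀ + k n) ≤ u (m₀ + k n) ≤ u m₀ + k c` for every `k`. -/
lemma le_div_of_forall_le_div_of_add_le {u : ℕ → ℝ} {L c : ℝ} {n m₀ : ℕ} (hn : n ≠ 0)
    (hL : ∀ j ≠ 0, L ≤ u j / j) (hstep : ∀ m ≥ m₀, u (n + m) ≤ u m + c) : L ≤ c / n := by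
  have hiter : ∀ k : ℕ, u (m₀ + k * n) ≤ u m₀ + k * c := by
    intro k
    induction k with
    | zero => simp
    | succ k ih =>
      have h := hstep (m₀ + k * n) (Nat.le_add_right _ _)
      rw [show m₀ + (k + 1) * n = n + (m₀ + k * n) by ring]
      push_cast
      linarith
  rw [le_div_iff₀ (by positivity)]
  by_contra! hlt
  obtain ⟨k, hk⟩ := exists_nat_gt ((u m₀ - L * m₀) / (L * n - c))
  have hj : m₀ + (k + 1) * n ≠ 0 := by positivity
  have hLj := hL _ hj
  rw [le_div_iff₀ (by positivity)] at hLj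
  rw [div_lt_iff₀ (by linarith)] at hk
  have := hiter (k + 1)
  push_cast at hLj this
  nlinarith

section Words

variable {A : Type*}

lemma card_lang_le [Fintype A] (X : Set (ℤ → A)) (n : ℕ) :
    Nat.card (Lang X n) ≤ Fintype.card A ^ n := by
  have hlen : Nat.card {u : List A | u.length = n} = Fintype.card A ^ n := by
    rw [← card_vector, ← Nat.card_eq_fintype_card]
    rfl
  exact hlen ▸ Nat.card_mono (List.finite_length_eq A n) fun _ hu => hu.1

lemma isBoundedUnder_log_card_lang [Fintype A] (X : Set (ℤ → A)) :
    IsBoundedUnder (· ≤ ·) atTop fun n : ℕ => Real.log (Nat.card (Lang X n)) / n := by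
  refine isBoundedUnder_of ⟨Real.log (Fintype.card A), fun n => ?_⟩
  rcases n.eq_zero_or_pos with rfl | hn
  · simpa using Real.log_natCast_nonneg _
  rw [div_le_iff₀ (by positivity), mul_comm, ← Real.log_pow]
  exact_mod_cast log_natCast_le_of_le (card_lang_le X n)

lemma mem_lang_of_fol_nonempty {X : Set (ℤ → A)} {w : List A} (h : (fol X w).Nonempty) :
    w ∈ Lang X w.length := by
  obtain ⟨_, B, hB, hw, -⟩ := h
  exact ⟨rfl, B, hB, fun i => by simpa using hw i⟩

lemma IsLeftConstraint.not_isSynchronizing {X : Set (ℤ → A)} {a : A} {u v r : List A}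
    (h : IsLeftConstraint X (a :: (u ++ v ++ r))) : ¬ IsSynchronizing X v := by
  intro hv
  obtain ⟨-, hne, hlt⟩ := h
  replace hne := Set.nonempty_iff_ne_empty.2 hne
  have hfol := hv.2 (a :: u) r (mem_lang_of_fol_nonempty hne)
  have hfol_tail := hv.2 u r (mem_lang_of_fol_nonempty (hne.mono hlt.subset))
  exact hlt.ne (hfol.trans hfol_tail.symm)

def window (x : ℤ → A) (a : ℤ) (n : ℕ) : List A :=
  List.ofFn fun i : Fin n => x (a + i)

@[simp]
lemma length_window (x : ℤ → A) (a : ℤ) (n : ℕ) : (window x a n).length = n :=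
  List.length_ofFn

lemma window_add (x : ℤ → A) (a : ℤ) (p q : ℕ) :
    window x a (p + q) = window x a p ++ window x (a + p) q := by
  simp [window, List.ofFn_add, add_assoc]

lemma window_succ (x : ℤ → A) (a : ℤ) (n : ℕ) :
    window x a (n + 1) = x a :: window x (a + 1) n := by
  simp only [window, List.ofFn_succ, Fin.val_zero, Fin.val_succ, Nat.cast_zero, add_zero,
    List.cons.injEq, true_and]
  congr 1
  funext i
  push_cast
  ring_nf

lemma occursAt_iff_window_eq {w : List A} {x : ℤ → A} {k : ℤ} :
    OccursAt w x k ↔ window x k w.length = w := by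
  constructor
  · intro h
    exact List.ext_getElem (by simp) fun i _ hi => by simpa [window] using h ⟨i, hi⟩
  · intro h i
    rw [List.get_eq_getElem, List.getElem_of_eq h.symm]
    simp [window]

lemma window_eq_wordOf_iff {x : ℤ → A} {b : ℕ → A} {m : ℕ} :
    window x (-m) (m + 1) = wordOf b m ↔ ∀ i ≤ m, x (-i) = b i := by
  simp only [List.ext_getElem_iff, length_window, wordOf, List.length_map, List.length_range,
    true_and]
  simp only [window, List.getElem_ofFn, List.getElem_map, List.getElem_range]
  constructor
  · intro h i hi
    have := h (m - i) (by omega) (by omega)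
    rwa [Nat.sub_sub_self hi, show -(m : ℤ) + ((m - i : ℕ) : ℤ) = -i by omega] at this
  · intro h j hj _
    rw [← h (m - j) (by omega)]
    congr 1
    omega

lemma IsLeftConstraint.not_occursAt_window {X : Set (ℤ → A)} {x : ℤ → A} {a : ℤ} {n : ℕ}
    (h : IsLeftConstraint X (window x a (n + 1))) {v : List A} (hv : IsSynchronizing X v)
    {k : ℤ} (hak : a < k) (hk : k + v.length ≤ a + n + 1) : ¬ OccursAt v x k := by
  intro hocc
  obtain ⟨p, rfl⟩ : ∃ p : ℕ, k = a + 1 + p := ⟨(k - a - 1).toNat, by omega⟩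
  obtain ⟨q, rfl⟩ : ∃ q : ℕ, n = p + v.length + q := ⟨n - p - v.length, by omega⟩
  rw [window_succ, window_add, window_add, occursAt_iff_window_eq.1 hocc] at h
  exact h.not_isSynchronizing hv

end Words

section Points

variable {A : Type*}

def shiftBy (c : ℤ) (x : ℤ → A) : ℤ → A := fun t => x (t + c)

lemma window_shiftBy (c : ℤ) (x : ℤ → A) (a : ℤ) (n : ℕ) :
    window (shiftBy c x) a n = window x (a + c) n := by
  simp [window, shiftBy, add_right_comm]

lemma shiftBy_mem {X : Set (ℤ → A)} (hX : shift '' X = X) {x : ℤ → A} (hx : x ∈ X) (c : ℤ) :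
    shiftBy c x ∈ X := by
  induction c using Int.induction_on with
  | zero =>
    convert hx using 1
    funext t
    simp [shiftBy]
  | succ c ih =>
    rw [← hX]
    exact ⟨_, ih, by funext t; simp only [shift, shiftBy]; ring_nf⟩
  | pred c ih =>
    rw [← hX] at ih
    obtain ⟨y, hy, hyx⟩ := ih
    convert hy using 1
    funext t
    have := congrFun hyx (t - 1)
    simp only [shift, shiftBy, sub_add_cancel] at this ⊢
    rw [this]
    ring_nf

def SyncFreeBelow (X : Set (ℤ → A)) (x : ℤ → A) (N : ℤ) : Prop :=
  ∀ v : List A, IsSynchronizing X v → ∀ k : ℤ, k + v.length ≤ N → ¬ OccursAt v x k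

lemma SyncFreeBelow.mono {X : Set (ℤ → A)} {x : ℤ → A} {N N' : ℤ} (h : SyncFreeBelow X x N)
    (hN : N' ≤ N) : SyncFreeBelow X x N' :=
  fun v hv k hk => h v hv k (hk.trans hN)

lemma SyncFreeBelow.shiftBy {X : Set (ℤ → A)} {x : ℤ → A} {N : ℤ} (h : SyncFreeBelow X x N)
    (c : ℤ) : SyncFreeBelow X (shiftBy c x) (N - c) := by
  intro v hv k hk hocc
  exact h v hv (k + c) (by omega) fun i => by simpa [QFTPaper.shiftBy, add_right_comm] using hocc i

def syncFreeLang (X : Set (ℤ → A)) (n m : ℕ) : Set (List A) :=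
  { u | ∃ x ∈ X, window x 0 n = u ∧ SyncFreeBelow X x (n + m) }

lemma syncFreeLang_antitone (X : Set (ℤ → A)) (n : ℕ) : Antitone (syncFreeLang X n) := by
  rintro m m' hm u ⟨x, hx, hu, hfree⟩
  exact ⟨x, hx, hu, hfree.mono (by omega)⟩

lemma syncFreeLang_finite [Finite A] (X : Set (ℤ → A)) (n m : ℕ) :
    (syncFreeLang X n m).Finite :=
  (List.finite_length_eq A n).subset (by rintro _ ⟨x, -, rfl, -⟩; simp)

lemma syncFreeLang_subset_image_append {X : Set (ℤ → A)} (hX : shift '' X = X) (n m : ℕ) :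
    syncFreeLang X (n + m) 0 ⊆
      (fun p => p.1 ++ p.2) '' (syncFreeLang X n m ×ˢ syncFreeLang X m 0) := by
  rintro _ ⟨x, hx, rfl, hfree⟩
  refine ⟨(window x 0 n, window x n m), ⟨⟨x, hx, rfl, by simpa using hfree⟩,
    ⟨shiftBy n x, shiftBy_mem hX hx n, by simp [window_shiftBy], ?_⟩⟩, by simp [window_add]⟩
  exact (hfree.shiftBy n).mono (by push_cast; omega)

lemma card_syncFreeLang_add_le [Finite A] {X : Set (ℤ → A)} (hX : shift '' X = X) (n m : ℕ) :
    Nat.card (syncFreeLang X (n + m) 0) ≤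
      Nat.card (syncFreeLang X n m) * Nat.card (syncFreeLang X m 0) :=
  card_le_mul_of_subset_image _ (syncFreeLang_subset_image_append hX n m)
    (syncFreeLang_finite X n m) (syncFreeLang_finite X m 0)

lemma subadditive_log_card_syncFreeLang [Finite A] {X : Set (ℤ → A)} (hX : shift '' X = X) :
    Subadditive fun n => Real.log (Nat.card (syncFreeLang X n 0)) := by
  intro n m
  apply log_natCast_le_add_of_le_mul
  exact (card_syncFreeLang_add_le hX n m).trans <| Nat.mul_le_mul_right _ <|
    Nat.card_mono (syncFreeLang_finite X n 0) (syncFreeLang_antitone X n (Nat.zero_le m))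

lemma exists_mem_frequently_eqOn [Finite A] [TopologicalSpace A] [DiscreteTopology A]
    {X : Set (ℤ → A)} (hX : IsClosed X) {y : ℕ → ℤ → A} (hy : ∀ k, y k ∈ X) :
    ∃ x ∈ X, ∀ s : Finset ℤ, ∃ᶠ k in atTop, ∀ t ∈ s, y k t = x t := by
  obtain ⟨x, hx⟩ := exists_clusterPt_of_compactSpace (map y atTop)
  refine ⟨x, hX.mem_of_mapClusterPt hx (Eventually.of_forall hy), fun s => ?_⟩
  have hU : (s : Set ℤ).pi (fun t => {x t}) ∈ 𝓝 x :=
    set_pi_mem_nhds s.finite_toSet fun t _ => mem_nhds_discrete.2 rfl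
  exact MapClusterPt.frequently hx hU

end Points

section Compactness

variable {A : Type*} [Fintype A] [TopologicalSpace A] [DiscreteTopology A] {X : Set (ℤ → A)}

lemma IsExtendable.exists_syncFreeBelow (hX : IsSubshift X) {w : List A}
    (hw : IsExtendable X w) :
    ∃ x ∈ X, window x (1 - w.length) w.length = w ∧ SyncFreeBelow X x 1 := by
  obtain ⟨hw, b, hbw, hinf⟩ := hw
  have hpoints : ∀ k : ℕ, ∃ y ∈ X, ∀ i ≤ k, y (-i) = b i := by
    intro k
    obtain ⟨m, hkm, hm⟩ := hinf k
    obtain ⟨B, hB, hBw⟩ := mem_lang_of_fol_nonempty (Set.nonempty_iff_ne_empty.2 hm.2.1) |>.2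
    have hwin : window (shiftBy m B) (-m) (m + 1) = wordOf b m := by
      rw [window_shiftBy, neg_add_cancel]
      simpa [wordOf, occursAt_iff_window_eq] using hBw
    exact ⟨shiftBy m B, shiftBy_mem hX.2 hB m,
      fun i hi => window_eq_wordOf_iff.1 hwin i (hi.trans hkm)⟩
  choose y hyX hyb using hpoints
  obtain ⟨x, hxX, hxy⟩ := exists_mem_frequently_eqOn hX.1 hyX
  have hxb : ∀ i : ℕ, x (-i) = b i := fun i => by
    obtain ⟨k, hk, hik⟩ := ((hxy {-(i : ℤ)}).and_eventually (eventually_ge_atTop i)).exists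
    rw [← hk _ (Finset.mem_singleton_self _), hyb k i hik]
  have hwin : ∀ m : ℕ, window x (-m) (m + 1) = wordOf b m :=
    fun m => window_eq_wordOf_iff.2 fun i _ => hxb i
  refine ⟨x, hxX, ?_, fun v hv k hk hocc => ?_⟩
  · obtain ⟨n, hn⟩ := Nat.exists_eq_add_one.2 (List.length_pos_of_ne_nil hw.1)
    rw [hn, ← hbw, hn, Nat.add_sub_cancel, ← hwin n]
    congr 1
    push_cast
    ring
  · obtain ⟨m, hm, hLC⟩ := hinf (1 - k).toNat
    rw [← hwin] at hLC
    exact hLC.not_occursAt_window hv (by omega) (by omega) hocc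

lemma tail_mem_syncFreeLang (hX : IsSubshift X) {n : ℕ} {w : List A} (hw : w ∈ ELC X (n + 1)) :
    w.tail ∈ syncFreeLang X n 0 := by
  obtain ⟨hlen, hw⟩ := hw
  obtain ⟨x, hxX, hxw, hfree⟩ := hw.exists_syncFreeBelow hX
  rw [hlen] at hxw
  refine ⟨shiftBy (1 - n) x, shiftBy_mem hX.2 hxX _, ?_, (hfree.shiftBy _).mono (by omega)⟩
  rw [← hxw, window_succ, List.tail_cons, window_shiftBy]
  congr 1
  push_cast
  ring

lemma card_ELC_succ_le (hX : IsSubshift X) (n : ℕ) :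
    Nat.card (ELC X (n + 1)) ≤ Fintype.card A * Nat.card (syncFreeLang X n 0) := by
  have hcons : ELC X (n + 1) ⊆
      (fun p => p.1 :: p.2) '' ((Set.univ : Set A) ×ˢ syncFreeLang X n 0) := by
    intro w hw
    have hne : w ≠ [] := hw.2.1.1
    exact ⟨(w.head hne, w.tail), ⟨trivial, tail_mem_syncFreeLang hX hw⟩, List.cons_head_tail hne⟩
  calc Nat.card (ELC X (n + 1))
      ≤ Nat.card (Set.univ : Set A) * Nat.card (syncFreeLang X n 0) :=
        card_le_mul_of_subset_image _ hcons Set.finite_univ (syncFreeLang_finite X n 0)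
    _ = Fintype.card A * Nat.card (syncFreeLang X n 0) := by
        rw [Nat.card_coe_set_eq, Set.ncard_univ, Nat.card_eq_fintype_card]

lemma mem_lang_noSync_of_forall_mem_syncFreeLang (hX : IsClosed X) {n : ℕ} {u : List A}
    (hu : ∀ m, u ∈ syncFreeLang X n m) : u ∈ Lang (NoSync X) n := by
  choose y hyX hyu hyfree using hu
  obtain ⟨x, hxX, hxy⟩ := exists_mem_frequently_eqOn hX hyX
  have hlen : u.length = n := by simp [← hyu 0]
  refine ⟨hlen, x, ⟨hxX, fun v hv k hocc => ?_⟩, ?_⟩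
  · obtain ⟨m, hagree, hm⟩ := ((hxy (Finset.Ico k (k + v.length))).and_eventually
      (eventually_ge_atTop (k + v.length).toNat)).exists
    exact hyfree m v hv k (by omega) fun i =>
      (hagree _ (Finset.mem_Ico.2 ⟨by omega, by omega⟩)).trans (hocc i)
  · obtain ⟨m, hagree⟩ := (hxy (Finset.Ico 0 n)).exists
    rw [occursAt_iff_window_eq, hlen, ← hyu m]
    simp only [window]
    congr 1
    funext i
    exact (hagree _ (Finset.mem_Ico.2 ⟨by omega, by omega⟩)).symm

lemma exists_syncFreeLang_subset_lang_noSync (hX : IsClosed X) (n : ℕ) :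
    ∃ m₀, syncFreeLang X n m₀ ⊆ Lang (NoSync X) n := by
  obtain ⟨m₀, hmin⟩ : ∃ m₀, ∀ m, (syncFreeLang X n m₀).ncard ≤ (syncFreeLang X n m).ncard :=
    ⟨_, fun m => Function.argmin_le (fun m => (syncFreeLang X n m).ncard) m⟩
  refine ⟨m₀, fun u hu => mem_lang_noSync_of_forall_mem_syncFreeLang hX fun m => ?_⟩
  rcases le_total m m₀ with h | h
  · exact syncFreeLang_antitone X n h hu
  · rwa [Set.eq_of_subset_of_ncard_le (syncFreeLang_antitone X n h) (hmin m)
      (syncFreeLang_finite X n m₀)]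

end Compactness

section Entropy

variable {A : Type*} [Fintype A] [TopologicalSpace A] [DiscreteTopology A] {X : Set (ℤ → A)}

lemma hCstar_le_of_tendsto (hX : IsSubshift X) {L : ℝ}
    (hL : Tendsto (fun n : ℕ => Real.log (Nat.card (syncFreeLang X n 0)) / n) atTop (𝓝 L)) :
    hCstar X ≤ L := by
  have hbound : Tendsto (fun n : ℕ => Real.log (Fintype.card A) / ((n + 1 : ℕ) : ℝ) +
      Real.log (Nat.card (syncFreeLang X n 0)) / n) atTop (𝓝 L) := by
    simpa using ((tendsto_const_div_atTop_nhds_zero_nat _).comp (tendsto_add_atTop_nat 1)).add hL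
  rw [hCstar, ← limsup_nat_add _ 1]
  calc limsup (fun n : ℕ => Real.log (Nat.card (ELC X (n + 1))) / ((n + 1 : ℕ) : ℝ)) atTop
      ≤ limsup (fun n : ℕ => Real.log (Fintype.card A) / ((n + 1 : ℕ) : ℝ) +
          Real.log (Nat.card (syncFreeLang X n 0)) / n) atTop := by
        refine limsup_le_limsup ?_ (isCoboundedUnder_le_of_le atTop fun n => by positivity)
          hbound.isBoundedUnder_le
        filter_upwards [eventually_ge_atTop 1] with n hn
        calc Real.log (Nat.card (ELC X (n + 1))) / ((n + 1 : ℕ) : ℝ)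
            ≤ (Real.log (Fintype.card A) + Real.log (Nat.card (syncFreeLang X n 0))) /
                ((n + 1 : ℕ) : ℝ) :=
              div_le_div_of_nonneg_right (log_natCast_le_add_of_le_mul (card_ELC_succ_le hX n))
                (by positivity)
          _ ≤ _ := by
              rw [add_div]
              exact add_le_add le_rfl (div_le_div_of_nonneg_left (Real.log_natCast_nonneg _)
                (Nat.cast_pos.2 hn) (Nat.cast_le.2 n.le_succ))
    _ = L := hbound.limsup_eq

lemma le_hTop_noSync_of_le_div (hX : IsSubshift X) {L : ℝ}
    (hL : ∀ n ≠ 0, L ≤ Real.log (Nat.card (syncFreeLang X n 0)) / n) :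
    L ≤ hTop (NoSync X) := by
  refine le_limsup_of_frequently_le (frequently_atTop.2 fun N => ⟨N + 1, N.le_succ, ?_⟩)
    (isBoundedUnder_log_card_lang _)
  obtain ⟨m₀, hm₀⟩ := exists_syncFreeLang_subset_lang_noSync hX.1 (N + 1)
  refine le_div_of_forall_le_div_of_add_le (m₀ := m₀) N.succ_ne_zero hL fun m hm => ?_
  apply log_natCast_le_add_of_le_mul
  calc Nat.card (syncFreeLang X (N + 1 + m) 0)
      ≤ Nat.card (syncFreeLang X (N + 1) m) * Nat.card (syncFreeLang X m 0) :=
        card_syncFreeLang_add_le hX.2 _ _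
    _ ≤ Nat.card (Lang (NoSync X) (N + 1)) * Nat.card (syncFreeLang X m 0) :=
        Nat.mul_le_mul_right _ (Nat.card_mono ((List.finite_length_eq A _).subset fun _ h => h.1)
          ((syncFreeLang_antitone X _ hm).trans hm₀))
    _ = Nat.card (syncFreeLang X m 0) * Nat.card (Lang (NoSync X) (N + 1)) := mul_comm _ _

theorem hCstar_le_hTop_noSync (hX : IsSubshift X) : hCstar X ≤ hTop (NoSync X) := by
  have hsub := subadditive_log_card_syncFreeLang hX.2
  have hbdd : BddBelow (Set.range fun n : ℕ => Real.log (Nat.card (syncFreeLang X n 0)) / n) :=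
    ⟨0, by rintro _ ⟨n, rfl⟩; positivity⟩
  exact (hCstar_le_of_tendsto hX (hsub.tendsto_lim hbdd)).trans
    (le_hTop_noSync_of_le_div hX fun n hn => hsub.lim_le_div hbdd hn)

end Entropy

theorem coded_with_synchronizing_weakQFT_general
    {A : Type*} [Fintype A] [TopologicalSpace A] [DiscreteTopology A]
    (X : Set (ℤ → A)) (hcoded : IsCoded X)
    (hent : hTop (NoSync X) < hTop X) :
    IsWeakQFT X := by
  have hX : IsSubshift X := hcoded.1
  exact ⟨hX, (min_le_left _ _).trans_lt ((hCstar_le_hTop_noSync hX).trans_lt hent)⟩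

/-- A coded system for which the set of sequences containing
no synchronizing word is a subshift of topological entropy `< h_top(X)` is a
weak-QFT. -/
theorem coded_with_synchronizing_weakQFT
    {A : Type*} [Fintype A] [TopologicalSpace A] [DiscreteTopology A]
    (X : Set (ℤ → A)) (hcoded : IsCoded X)
    (hsub : IsSubshift (NoSync X)) (hent : hTop (NoSync X) < hTop X) :
    IsWeakQFT X :=
  coded_with_synchronizing_weakQFT_general X hcoded hent

end QFTPaper
end
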